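/- Suppose G' and H' are nonempty subgraphs of G and H respectively. Then G' □ H' is an isometric subgraph of G □ H if and only if G' is an isometric subgraph of G and H' is an isometric subgraph of H. -/

import Mathlib

open SimpleGraph

variable {α β : Type*}

/-- The lexicographic product `G[H]`. -/
def lexProd (G : SimpleGraph α) (H : SimpleGraph β) : SimpleGraph (α × β) where
  Adj p q := G.Adj p.1 q.1 ∨ (p.1 = q.1 ∧ H.Adj p.2 q.2)
  symm := by
    refine ⟨?_⟩
    rintro ⟨u, x⟩ ⟨v, y⟩ (h | ⟨h1, h2⟩)
    · exact Or.inl h.symm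
    · exact Or.inr ⟨h1.symm, h2.symm⟩
  loopless := by
    refine ⟨?_⟩
    rintro ⟨u, x⟩ (h | ⟨-, h⟩)
    · exact G.irrefl h
    · exact H.irrefl h

/-- The induced subgraph on `S` is an isometric subgraph of `G`. -/
def IsometricSet (G : SimpleGraph α) (S : Set α) : Prop :=
  ∀ a b : S, (G.induce S).edist a b = G.edist a.1 b.1

/-- The set of orders of isometric (induced) subgraphs of `G`. -/
def dpSet (G : SimpleGraph α) : Set ℕ :=
  {k | ∃ S : Finset α, S.card = k ∧ IsometricSet G ↑S}

/-- `G` is distance preserving. -/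
def IsDP [Fintype α] (G : SimpleGraph α) : Prop :=
  G.Connected ∧ ∀ i : ℕ, 1 ≤ i → i ≤ Fintype.card α → i ∈ dpSet G

/-- `l` is an sdp sequence for `G`. -/
def IsSdpList [Fintype α] (G : SimpleGraph α) (l : List α) : Prop :=
  l.Nodup ∧ (∀ v : α, v ∈ l) ∧
    ∀ s : ℕ, IsometricSet G {v : α | v ∉ l.take s}

/-- `G` is sequentially distance preserving. -/
def IsSDP [Fintype α] (G : SimpleGraph α) : Prop :=
  G.Connected ∧ ∃ l : List α, IsSdpList G l

/-!
Distances in `G □ H` are sums, `d((a, x), (b, y)) = d_G(a, b) + d_H(x, y)`, and the subgraph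
of `G □ H` induced on `A × B` is the box product of the induced subgraphs, so its distances are
sums too. Comparing the two sums gives one direction; the other follows by fixing one coordinate
in the nonempty factor, where its distance term vanishes.
-/

namespace SimpleGraph

variable {γ : Type*} {G : SimpleGraph α} {H : SimpleGraph β} {K : SimpleGraph γ}

theorem edist_map_le (f : G →g K) (u v : α) : K.edist (f u) (f v) ≤ G.edist u v := by
  by_cases hr : G.Reachable u v
  · obtain ⟨w, hw⟩ := hr.exists_walk_length_eq_edist
    rw [← hw, ← w.length_map f]
    exact edist_le _
  · rw [edist_eq_top_of_not_reachable hr]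
    exact le_top

theorem Iso.edist_eq (f : G ≃g K) (u v : α) : K.edist (f u) (f v) = G.edist u v :=
  le_antisymm (edist_map_le f.toHom u v) (by simpa using edist_map_le f.symm.toHom (f u) (f v))

def induceProdIsoBoxProd (A : Set α) (B : Set β) :
    (G □ H).induce (A ×ˢ B) ≃g G.induce A □ H.induce B where
  toEquiv := Equiv.Set.prod A B
  map_rel_iff' := by
    rintro ⟨⟨a, x⟩, ha⟩ ⟨⟨b, y⟩, hb⟩
    simp only [Equiv.Set.prod, Equiv.subtypeProdEquivProd, boxProd_adj, comap_adj,
      Function.Embedding.coe_subtype, Subtype.ext_iff]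
    rfl

theorem edist_induce_prod {A : Set α} {B : Set β} (p q : ↥(A ×ˢ B)) :
    ((G □ H).induce (A ×ˢ B)).edist p q =
      (G.induce A).edist ⟨p.1.1, p.2.1⟩ ⟨q.1.1, q.2.1⟩ +
        (H.induce B).edist ⟨p.1.2, p.2.2⟩ ⟨q.1.2, q.2.2⟩ := by
  rw [← (induceProdIsoBoxProd A B).edist_eq, edist_boxProd]
  rfl

end SimpleGraph

open SimpleGraph

section

variable {G : SimpleGraph α} {H : SimpleGraph β} {A : Set α} {B : Set β}

theorem IsometricSet.prod (hA : IsometricSet G A) (hB : IsometricSet H B) :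
    IsometricSet (G □ H) (A ×ˢ B) := by
  intro p q
  rw [edist_induce_prod, hA, hB, edist_boxProd]

theorem IsometricSet.of_prod_left (h : IsometricSet (G □ H) (A ×ˢ B)) (hB : B.Nonempty) :
    IsometricSet G A := by
  obtain ⟨y, hy⟩ := hB
  rintro ⟨a, ha⟩ ⟨b, hb⟩
  simpa [edist_induce_prod, edist_boxProd] using h ⟨(a, y), ha, hy⟩ ⟨(b, y), hb, hy⟩

theorem IsometricSet.of_prod_right (h : IsometricSet (G □ H) (A ×ˢ B)) (hA : A.Nonempty) :
    IsometricSet H B := by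
  obtain ⟨a, ha⟩ := hA
  rintro ⟨x, hx⟩ ⟨y, hy⟩
  simpa [edist_induce_prod, edist_boxProd] using h ⟨(a, x), ha, hx⟩ ⟨(a, y), ha, hy⟩

end

theorem stmt_8 (G : SimpleGraph α) (H : SimpleGraph β)
    (A : Set α) (B : Set β) (hA : A.Nonempty) (hB : B.Nonempty) :
    IsometricSet (G □ H) (A ×ˢ B) ↔ IsometricSet G A ∧ IsometricSet H B := by
  exact ⟨fun h ↦ ⟨h.of_prod_left hB, h.of_prod_right hA⟩, fun ⟨hGA, hHB⟩ ↦ hGA.prod hHB⟩
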